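/- arXiv:1902.02707 — 5 statements merged into one kernel-verified Lean document; each statement's English description precedes it below -/
import Mathlib

section
/- Soundness of L*_CS-subset models: for every logic L* (consisting of cl, j+, jc* together with some subset of {j4, jd, jt}), every constant specification CS for L*, and every formula F ∈ L_J, if L*_CS ⊢ F then M, ω ⊩ F for every L*_CS-subset model M = (W, W0, V, E) and every world ω ∈ W0. -/
/-- Justification terms: constants `c_i`, variables `x_i`, the distinguished
constant `c*`, sum `+` and `!`. -/
inductive Tm : Type
  | const : ℕ → Tm
  | var : ℕ → Tm
  | cstar : Tm
  | plus : Tm → Tm → Tm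
  | bang : Tm → Tm

/-- Formulas of `L_J`: atomic propositions, `⊥`, implication and `t:F`. -/
inductive Fml : Type
  | atom : ℕ → Fml
  | bot : Fml
  | imp : Fml → Fml → Fml
  | just : Tm → Fml → Fml

namespace Fml
/-- `¬A := A → ⊥`. -/
def neg (A : Fml) : Fml := A.imp .bot
/-- `A ∨ B := ¬A → B`. -/
def or' (A B : Fml) : Fml := A.neg.imp B
/-- `A ∧ B := ¬(A → ¬B)`. -/
def and' (A B : Fml) : Fml := (A.imp B.neg).neg
end Fml

/-- `c*`-terms: `c*` itself, or `s + c` or `c + t` with `c` a `c*`-term. -/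
def Tm.isCStar : Tm → Bool
  | .cstar => true
  | .plus s t => s.isCStar || t.isCStar
  | _ => false

/-- Which of the optional axioms j4, jd, jt belong to the logic `L*`. -/
structure Flags : Type where
  j4 : Bool
  jd : Bool
  jt : Bool

/-- The axioms of the logic `L*`: classical propositional axioms, j+, jc*,
together with the optional axioms j4, jd, jt as given by the flags. -/
inductive StarAxiom (fl : Flags) : Fml → Prop
  | cl1 (A B : Fml) : StarAxiom fl (A.imp (B.imp A))
  | cl2 (A B C : Fml) :
      StarAxiom fl ((A.imp (B.imp C)).imp ((A.imp B).imp (A.imp C)))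
  | cl3 (A : Fml) : StarAxiom fl (A.neg.neg.imp A)
  | jplus (s t : Tm) (A : Fml) :
      StarAxiom fl (((Fml.just s A).or' (Fml.just t A)).imp (Fml.just (s.plus t) A))
  | jcstar (c : Tm) (A B : Fml) (h : c.isCStar = true) :
      StarAxiom fl (((Fml.just c A).and' (Fml.just c (A.imp B))).imp (Fml.just c B))
  | j4 (t : Tm) (A : Fml) (h : fl.j4 = true) :
      StarAxiom fl ((Fml.just t A).imp (Fml.just t.bang (Fml.just t A)))
  | jd (t : Tm) (h : fl.jd = true) :
      StarAxiom fl ((Fml.just t Fml.bot).imp Fml.bot)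
  | jt (t : Tm) (A : Fml) (h : fl.jt = true) :
      StarAxiom fl ((Fml.just t A).imp A)

/-- `bangIter n t = !…!t` with `n` occurrences of `!`. -/
def bangIter : ℕ → Tm → Tm
  | 0, t => t
  | n + 1, t => (bangIter n t).bang

/-- `anFml c A n = !…!c : !…!c : … : !c : c : A` (with `n, n-1, …, 1, 0` bangs). -/
def anFml (c : Tm) (A : Fml) : ℕ → Fml
  | 0 => Fml.just c A
  | n + 1 => Fml.just (bangIter (n + 1) c) (anFml c A n)

/-- A constant specification for `L*`: a set of pairs `(c, A)` where `c` is a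
constant and `A` an axiom of `L*`. -/
def IsCS (fl : Flags) (CS : Set (ℕ × Fml)) : Prop :=
  ∀ p ∈ CS, StarAxiom fl p.2

/-- `CS` is axiomatically appropriate: every axiom has a constant justifying it. -/
def AxAppropriate (fl : Flags) (CS : Set (ℕ × Fml)) : Prop :=
  ∀ A : Fml, StarAxiom fl A → ∃ c : ℕ, (c, A) ∈ CS

/-- Hilbert-style derivability in `L*_CS`: axioms of `L*`, modus ponens, and
axiom necessitation. -/
inductive Deriv (fl : Flags) (CS : Set (ℕ × Fml)) : Fml → Prop
  | ax {A : Fml} : StarAxiom fl A → Deriv fl CS A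
  | mp {A B : Fml} : Deriv fl CS (A.imp B) → Deriv fl CS A → Deriv fl CS B
  | an {c : ℕ} {A : Fml} (n : ℕ) (h : (c, A) ∈ CS) :
      Deriv fl CS (anFml (Tm.const c) A n)

/-- An `L*_CS`-subset model `(W, W0, V, E)`; `V ω F` encodes `V(ω,F) = 1`. -/
structure SubsetModel (fl : Flags) (CS : Set (ℕ × Fml)) (W : Type*) : Type _ where
  W0 : Set W
  V : W → Fml → Prop
  E : W → Tm → Set W
  w0_nonempty : W0.Nonempty
  v_bot : ∀ ω ∈ W0, ¬ V ω Fml.bot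
  v_imp : ∀ ω ∈ W0, ∀ F G : Fml, V ω (F.imp G) ↔ (¬ V ω F ∨ V ω G)
  v_just : ∀ ω ∈ W0, ∀ (t : Tm) (F : Fml),
      V ω (Fml.just t F) ↔ E ω t ⊆ {υ | V υ F}
  e_plus : ∀ ω ∈ W0, ∀ s t : Tm, E ω (s.plus t) ⊆ E ω s ∩ E ω t
  e_cstar : ∀ ω ∈ W0,
      E ω Tm.cstar ⊆ {υ | ∀ A B : Fml, V υ A → V υ (A.imp B) → V υ B}
  e_jd : fl.jd = true → ∀ ω ∈ W0, ∀ t : Tm, ∃ υ ∈ W0, υ ∈ E ω t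
  e_jt : fl.jt = true → ∀ ω ∈ W0, ∀ t : Tm, ω ∈ E ω t
  e_j4 : fl.j4 = true → ∀ ω ∈ W0, ∀ t : Tm,
      E ω t.bang ⊆ {υ | ∀ F : Fml, V ω (Fml.just t F) → V υ (Fml.just t F)}
  e_cs : ∀ ω ∈ W0, ∀ (c : ℕ) (A : Fml), (c, A) ∈ CS →
      E ω (Tm.const c) ⊆ {υ | V υ A}
  e_cs_bang : ∀ ω ∈ W0, ∀ (c : ℕ) (A : Fml), (c, A) ∈ CS → ∀ n : ℕ,
      E ω (bangIter (n + 1) (Tm.const c)) ⊆ {υ | V υ (anFml (Tm.const c) A n)}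

lemma cstar_subset {fl : Flags} {CS : Set (ℕ × Fml)} {W : Type}
    (M : SubsetModel fl CS W) {ω : W} (hω : ω ∈ M.W0) :
    ∀ c : Tm, c.isCStar = true →
      M.E ω c ⊆ {υ | ∀ A B : Fml, M.V υ A → M.V υ (A.imp B) → M.V υ B} := by
  intro c
  induction c with
  | cstar => intro _; exact M.e_cstar ω hω
  | plus s t ihs iht =>
    intro h υ hυ
    have h' := M.e_plus ω hω s t hυ
    rcases Bool.or_eq_true_iff.mp h with hs | ht
    · exact ihs hs h'.1
    · exact iht ht h'.2
  | const n => simp [Tm.isCStar]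
  | var n => simp [Tm.isCStar]
  | bang t ih => simp [Tm.isCStar]

lemma axiom_sound {fl : Flags} {CS : Set (ℕ × Fml)} {W : Type}
    (M : SubsetModel fl CS W) {ω : W} (hω : ω ∈ M.W0) {A : Fml}
    (hA : StarAxiom fl A) : M.V ω A := by
  have vimp := M.v_imp ω hω
  have vbot := M.v_bot ω hω
  have vjust := M.v_just ω hω
  induction hA with
  | cl1 A B =>
    rw [vimp]
    by_cases h : M.V ω A
    · right; rw [vimp]; right; exact h
    · left; exact h
  | cl2 A B C =>
    rw [vimp]
    by_cases hA : M.V ω A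
    · by_cases hB : M.V ω B
      · by_cases hC : M.V ω C
        · right; rw [vimp]; right; rw [vimp]; right; exact hC
        · left; rw [vimp]; push_neg
          refine ⟨hA, ?_⟩
          rw [vimp]; push_neg
          exact ⟨hB, hC⟩
      · by_cases hABC : M.V ω (A.imp (B.imp C))
        · right; rw [vimp]; left; rw [vimp]; push_neg; exact ⟨hA, hB⟩
        · left; exact hABC
    · right; rw [vimp]; right; rw [vimp]; left; exact hA
  | cl3 A =>
    rw [vimp]
    by_cases h : M.V ω A
    · right; exact h
    · left
      unfold Fml.neg
      rw [vimp]; push_neg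
      constructor
      · rw [vimp]; left; exact h
      · exact vbot
  | jplus s t A =>
    rw [vimp]
    by_cases hs : M.V ω (Fml.just s A)
    · right
      rw [vjust] at hs ⊢
      intro υ hυ
      exact hs (M.e_plus ω hω s t hυ).1
    · by_cases ht : M.V ω (Fml.just t A)
      · right
        rw [vjust] at ht ⊢
        intro υ hυ
        exact ht (M.e_plus ω hω s t hυ).2
      · left
        unfold Fml.or' Fml.neg
        rw [vimp]; push_neg
        constructor
        · rw [vimp]; left; exact hs
        · exact ht
  | jcstar c A B hc =>
    rw [vimp]
    by_cases h1 : M.V ω (Fml.just c A)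
    · by_cases h2 : M.V ω (Fml.just c (A.imp B))
      · right
        rw [vjust] at h1 h2 ⊢
        intro υ hυ
        exact cstar_subset M hω c hc hυ A B (h1 hυ) (h2 hυ)
      · left
        unfold Fml.and' Fml.neg
        rw [vimp]; push_neg
        refine ⟨?_, vbot⟩
        rw [vimp]
        right
        rw [vimp]
        left
        exact h2
    · left
      unfold Fml.and' Fml.neg
      rw [vimp]; push_neg
      refine ⟨?_, vbot⟩
      rw [vimp]
      left
      exact h1
  | j4 t A hfl =>
    rw [vimp]
    by_cases h : M.V ω (Fml.just t A)
    · right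
      rw [vjust]
      intro υ hυ
      exact M.e_j4 hfl ω hω t hυ A h
    · left; exact h
  | jd t hfl =>
    rw [vimp]
    left
    intro h
    rw [vjust] at h
    obtain ⟨υ, hυ0, hυ⟩ := M.e_jd hfl ω hω t
    exact M.v_bot υ hυ0 (h hυ)
  | jt t A hfl =>
    rw [vimp]
    by_cases h : M.V ω (Fml.just t A)
    · right
      rw [vjust] at h
      exact h (M.e_jt hfl ω hω t)
    · left; exact h

/-- **Soundness of `L*_CS`-subset models**: if `L*_CS ⊢ F` then `M, ω ⊩ F` for
every `L*_CS`-subset model `M` and every `ω ∈ W0`. -/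
theorem soundness_of_subset_models (fl : Flags) (CS : Set (ℕ × Fml))
    (hCS : IsCS fl CS) (F : Fml) (h : Deriv fl CS F) :
    ∀ (W : Type) (M : SubsetModel fl CS W), ∀ ω ∈ M.W0, M.V ω F := by
  induction h with
  | ax hA => intro W M ω hω; exact axiom_sound M hω hA
  | mp hAB hA ihAB ihA =>
    intro W M ω hω
    rcases (M.v_imp ω hω _ _).mp (ihAB W M ω hω) with h | h
    · exact absurd (ihA W M ω hω) h
    · exact h
  | an n hc =>
    intro W M ω hω
    cases n with
    | zero =>
      rw [anFml, M.v_just ω hω]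
      exact M.e_cs ω hω _ _ hc
    | succ m =>
      rw [anFml, M.v_just ω hω]
      exact M.e_cs_bang ω hω _ _ hc m
end

section
/- The j-axiom is valid in L*_CS-subset models: defining s·t := s+t+c*, for every L*_CS-subset model M = (W, W0, V, E), every ω ∈ W0, all formulas A, B ∈ L_J and all terms s, t ∈ Tm, M, ω ⊩ s:(A→B) → (t:A → s·t:B). -/
/-- The defined application operation `s · t := s + t + c*`. -/
def Tm.appDef (s t : Tm) : Tm := (s.plus t).plus Tm.cstar

/-- **Validity of the j-axiom**: with `s·t := s+t+c*`, for every `L*_CS`-subset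
model `M`, every `ω ∈ W0`, all formulas `A, B` and all terms `s, t`:
`M, ω ⊩ s:(A→B) → (t:A → s·t:B)`. -/
theorem j_axiom_valid (fl : Flags) (CS : Set (ℕ × Fml)) (hCS : IsCS fl CS)
    (W : Type) (M : SubsetModel fl CS W) (ω : W) (hω : ω ∈ M.W0)
    (A B : Fml) (s t : Tm) :
    M.V ω ((Fml.just s (A.imp B)).imp
      ((Fml.just t A).imp (Fml.just (s.appDef t) B))) := by
  rw [M.v_imp ω hω]
  by_cases h1 : M.V ω (Fml.just s (A.imp B))
  · right
    rw [M.v_imp ω hω]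
    by_cases h2 : M.V ω (Fml.just t A)
    · right
      rw [M.v_just ω hω]
      intro υ hυ
      have h3 := M.e_plus ω hω (s.plus t) Tm.cstar hυ
      have h4 := M.e_plus ω hω s t h3.1
      have hmp := M.e_cstar ω hω h3.2
      have hAB : M.V υ (A.imp B) := (M.v_just ω hω s (A.imp B)).mp h1 h4.1
      have hA : M.V υ A := (M.v_just ω hω t A).mp h2 h4.2
      exact hmp A B hA hAB
    · left; exact h2
  · left; exact h1
end

section
/- Conservativity of L* over classical propositional logic: for every logic L* (consisting of cl, j+, jc* together with some subset of {j4, jd, jt}) and every purely propositional formula F ∈ L_cp (containing no justification terms), L* ⊢ F if and only if CL ⊢ F, where CL is classical propositional logic. -/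
/-- Purely propositional formulas `L_cp`: built only from atomic propositions,
`⊥` and `→`. -/
inductive PFml : Type
  | atom : ℕ → PFml
  | bot : PFml
  | imp : PFml → PFml → PFml

/-- `¬A := A → ⊥` for propositional formulas. -/
def PFml.neg (A : PFml) : PFml := A.imp .bot

/-- The inclusion of `L_cp` into `L_J`. -/
def PFml.toFml : PFml → Fml
  | .atom n => .atom n
  | .bot => .bot
  | .imp A B => .imp A.toFml B.toFml

/-- A Hilbert system `CL` for classical propositional logic over `L_cp`,
with modus ponens. -/
inductive DerivCL : PFml → Prop
  | cl1 (A B : PFml) : DerivCL (A.imp (B.imp A))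
  | cl2 (A B C : PFml) :
      DerivCL ((A.imp (B.imp C)).imp ((A.imp B).imp (A.imp C)))
  | cl3 (A : PFml) : DerivCL (A.neg.neg.imp A)
  | mp {A B : PFml} : DerivCL (A.imp B) → DerivCL A → DerivCL B

/-- Forget justification terms. -/
def forget : Fml → PFml
  | .atom n => .atom n
  | .bot => .bot
  | .imp A B => .imp (forget A) (forget B)
  | .just _ F => forget F

lemma forget_toFml (F : PFml) : forget F.toFml = F := by
  induction F <;> simp [PFml.toFml, forget, *]

lemma forget_anFml (c : Tm) (A : Fml) (n : ℕ) :
    forget (anFml c A n) = forget A := by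
  induction n with
  | zero => rfl
  | succ n ih => simpa [anFml, forget] using ih

/-- Hilbert system with hypotheses. -/
inductive DH : List PFml → PFml → Prop
  | hyp {Γ A} : A ∈ Γ → DH Γ A
  | cl1 {Γ} (A B : PFml) : DH Γ (A.imp (B.imp A))
  | cl2 {Γ} (A B C : PFml) :
      DH Γ ((A.imp (B.imp C)).imp ((A.imp B).imp (A.imp C)))
  | cl3 {Γ} (A : PFml) : DH Γ (A.neg.neg.imp A)
  | mp {Γ A B} : DH Γ (A.imp B) → DH Γ A → DH Γ B

lemma DH.weaken {Γ Δ : List PFml} {A} (h : DH Γ A) (hs : ∀ x ∈ Γ, x ∈ Δ) :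
    DH Δ A := by
  induction h generalizing Δ with
  | hyp hm => exact DH.hyp (hs _ hm)
  | cl1 A B => exact DH.cl1 A B
  | cl2 A B C => exact DH.cl2 A B C
  | cl3 A => exact DH.cl3 A
  | mp _ _ ih1 ih2 => exact (ih1 hs).mp (ih2 hs)

lemma DH.id (Γ : List PFml) (A : PFml) : DH Γ (A.imp A) :=
  ((DH.cl2 A (A.imp A) A).mp (DH.cl1 A (A.imp A))).mp (DH.cl1 A A)

lemma DH.deduction {Γ : List PFml} {A B : PFml} (h : DH (A :: Γ) B) :
    DH Γ (A.imp B) := by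
  induction h with
  | hyp hm =>
    rename_i B
    rcases List.mem_cons.1 hm with rfl | hm
    · exact DH.id Γ B
    · exact (DH.cl1 B A).mp (DH.hyp hm)
  | cl1 X Y => exact (DH.cl1 _ A).mp (DH.cl1 X Y)
  | cl2 X Y Z => exact (DH.cl1 _ A).mp (DH.cl2 X Y Z)
  | cl3 X => exact (DH.cl1 _ A).mp (DH.cl3 X)
  | @mp X Y _ _ ih1 ih2 => exact ((DH.cl2 A X Y).mp ih1).mp ih2

lemma DH.byContra {Γ : List PFml} {A : PFml} (h : DH (A.neg :: Γ) PFml.bot) :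
    DH Γ A :=
  (DH.cl3 A).mp (DH.deduction h)

lemma dh_peirce (Γ : List PFml) (A : PFml) : DH Γ ((A.neg.imp A).imp A) := by
  apply DH.deduction
  apply DH.byContra
  have hneg : DH (A.neg :: (A.neg.imp A) :: Γ) A.neg := DH.hyp (by simp)
  have hA : DH (A.neg :: (A.neg.imp A) :: Γ) A :=
    (DH.hyp (by simp)).mp hneg
  exact hneg.mp hA

lemma dh_andmp (Γ : List PFml) (P Q : PFml) :
    DH Γ (((P.imp (P.imp Q).neg).neg).imp Q) := by
  apply DH.deduction
  apply DH.byContra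
  have key : DH (Q.neg :: (P.imp (P.imp Q).neg).neg :: Γ) (P.imp (P.imp Q).neg) := by
    apply DH.deduction
    apply DH.deduction
    have hQ : DH ((P.imp Q) :: P :: Q.neg :: (P.imp (P.imp Q).neg).neg :: Γ) Q :=
      (DH.hyp (show P.imp Q ∈ _ by simp)).mp (DH.hyp (show P ∈ _ by simp))
    exact (DH.hyp (show Q.neg ∈ _ by simp)).mp hQ
  exact (DH.hyp (show (P.imp (P.imp Q).neg).neg ∈ _ by simp)).mp key

lemma dh_to_cl {A : PFml} (h : DH [] A) : DerivCL A := by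
  generalize hΓ : ([] : List PFml) = Γ at h
  induction h with
  | hyp hm => subst hΓ; simp at hm
  | cl1 A B => exact DerivCL.cl1 A B
  | cl2 A B C => exact DerivCL.cl2 A B C
  | cl3 A => exact DerivCL.cl3 A
  | mp _ _ ih1 ih2 => exact ih1.mp ih2

lemma forget_axiom {fl : Flags} {A : Fml} (h : StarAxiom fl A) :
    DerivCL (forget A) := by
  cases h with
  | cl1 A B => exact DerivCL.cl1 _ _
  | cl2 A B C => exact DerivCL.cl2 _ _ _
  | cl3 A => exact DerivCL.cl3 _
  | jplus s t A => exact dh_to_cl (dh_peirce [] (forget A))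
  | jcstar c A B _ => exact dh_to_cl (dh_andmp [] (forget A) (forget B))
  | j4 t A _ => exact dh_to_cl (DH.id [] (forget (Fml.just t A)))
  | jd t _ => exact dh_to_cl (DH.id [] PFml.bot)
  | jt t A _ => exact dh_to_cl (DH.id [] (forget A))

lemma forget_deriv {fl CS} (hCS : IsCS fl CS) {A : Fml}
    (h : Deriv fl CS A) : DerivCL (forget A) := by
  induction h with
  | ax hA => exact forget_axiom hA
  | mp _ _ ih1 ih2 => exact ih1.mp ih2
  | an n hc => rw [forget_anFml]; exact forget_axiom (hCS _ hc)

lemma cl_to_deriv {fl CS} {F : PFml} (h : DerivCL F) :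
    Deriv fl CS F.toFml := by
  induction h with
  | cl1 A B => exact Deriv.ax (StarAxiom.cl1 _ _)
  | cl2 A B C => exact Deriv.ax (StarAxiom.cl2 _ _ _)
  | cl3 A => exact Deriv.ax (StarAxiom.cl3 _)
  | mp _ _ ih1 ih2 => exact ih1.mp ih2

/-- **Conservativity of `L*` over classical propositional logic**: for every
purely propositional formula `F`, `L* ⊢ F` iff `CL ⊢ F`. -/

theorem conservativity (fl : Flags) (CS : Set (ℕ × Fml)) (hCS : IsCS fl CS)
    (F : PFml) : Deriv fl CS F.toFml ↔ DerivCL F := by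

  constructor
  · intro h
    have := forget_deriv hCS h
    rwa [forget_toFml] at this
  · exact cl_to_deriv
end

section
/- Consistency of the logics L*_CS: for every logic L* (consisting of cl, j+, jc* together with some subset of {j4, jd, jt}) and every constant specification CS for L*, the logic L*_CS is consistent, i.e. L*_CS ⊬ ⊥. -/
/-- Boolean evaluation collapsing `t:F` to `F`. -/
def evalF : Fml → Bool
  | .atom _ => true
  | .bot => false
  | .imp A B => !evalF A || evalF B
  | .just _ F => evalF F

lemma evalF_anFml (c : Tm) (A : Fml) : ∀ n, evalF (anFml c A n) = evalF A
  | 0 => rfl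
  | n + 1 => evalF_anFml c A n

lemma evalF_axiom {fl : Flags} {A : Fml} (h : StarAxiom fl A) : evalF A = true := by
  cases h with
  | cl1 A B =>
      simp only [evalF]; cases evalF A <;> cases evalF B <;> rfl
  | cl2 A B C =>
      simp only [evalF]
      cases evalF A <;> cases evalF B <;> cases evalF C <;> rfl
  | cl3 A =>
      simp only [evalF, Fml.neg]; cases evalF A <;> rfl
  | jplus s t A =>
      simp only [evalF, Fml.neg, Fml.or']; cases evalF A <;> rfl
  | jcstar c A B _ =>
      simp only [evalF, Fml.neg, Fml.and']
      cases evalF A <;> cases evalF B <;> rfl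
  | j4 t A _ =>
      simp only [evalF]; cases evalF A <;> rfl
  | jd t _ => rfl
  | jt t A _ =>
      simp only [evalF]; cases evalF A <;> rfl

lemma evalF_deriv {fl : Flags} {CS : Set (ℕ × Fml)} (hCS : IsCS fl CS) {A : Fml}
    (h : Deriv fl CS A) : evalF A = true := by
  induction h with
  | ax h => exact evalF_axiom h
  | mp _ _ ih1 ih2 =>
      simp only [evalF, ih2, Bool.not_true, Bool.false_or] at ih1; exact ih1
  | an n h => rw [evalF_anFml]; exact evalF_axiom (hCS _ h)

/-- **Consistency of the logics `L*_CS`**: for every logic `L*` and every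
constant specification `CS` for `L*`, `L*_CS ⊬ ⊥`. -/
theorem logics_consistent (fl : Flags) (CS : Set (ℕ × Fml)) (hCS : IsCS fl CS) :
    ¬ Deriv fl CS Fml.bot := fun h => by simpa [evalF] using evalF_deriv hCS h
end

section
/- The canonical model is an L*_CS-subset model: for a logic L*_CS, define the canonical model M^C = (W^C, W0^C, V^C, E^C) by W^C = P(L_J); W0^C = {Γ ∈ W^C | Γ is a maximal L*_CS-consistent set of formulas}; V^C(Γ,F)=1 iff F ∈ Γ; and, with Γ/t := {F ∈ L_J | t:F ∈ Γ} and W_MP^C := {Γ ∈ W^C | for all A, B, if A→B ∈ Γ and A ∈ Γ then B ∈ Γ}, E^C(Γ,t) = {Δ ∈ W_MP^C | Δ ⊇ Γ/t} if t is a c*-term and E^C(Γ,t) = {Δ ∈ W^C | Δ ⊇ Γ/t} otherwise. If either jd ∉ L*, or CS is axiomatically appropriate, or jt ∈ L*, then M^C is an L*_CS-subset model. -/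
/-- The conjunction `⋀Σ` of a finite (list of) formulas. -/
def conjList : List Fml → Fml
  | [] => Fml.bot.imp Fml.bot
  | A :: l => A.and' (conjList l)

/-- `Γ` is `L*_CS`-consistent: `L*_CS ⊬ ⋀Σ → ⊥` for every finite `Σ ⊆ Γ`. -/
def SetConsistent (fl : Flags) (CS : Set (ℕ × Fml)) (Γ : Set Fml) : Prop :=
  ∀ l : List Fml, (∀ A ∈ l, A ∈ Γ) → ¬ Deriv fl CS ((conjList l).imp Fml.bot)

/-- `Γ` is maximal `L*_CS`-consistent: it is consistent and no proper superset
of it is consistent. -/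
def MaxConsistent (fl : Flags) (CS : Set (ℕ × Fml)) (Γ : Set Fml) : Prop :=
  SetConsistent fl CS Γ ∧ ∀ Δ : Set Fml, Γ ⊂ Δ → ¬ SetConsistent fl CS Δ

/-- `Γ/t := {F | t:F ∈ Γ}`. -/
def slash (Γ : Set Fml) (t : Tm) : Set Fml := {F | Fml.just t F ∈ Γ}

/-- `W_MP^C`: the worlds of the canonical model closed under modus ponens. -/
def WMPC : Set (Set Fml) :=
  {Γ | ∀ A B : Fml, A.imp B ∈ Γ → A ∈ Γ → B ∈ Γ}

/-- The canonical evidence function: `E^C(Γ,t) = {Δ ∈ W_MP^C | Δ ⊇ Γ/t}` if `t`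
is a `c*`-term, and `E^C(Γ,t) = {Δ | Δ ⊇ Γ/t}` otherwise. -/
def canonicalE (Γ : Set Fml) (t : Tm) : Set (Set Fml) :=
  if t.isCStar then {Δ | Δ ∈ WMPC ∧ slash Γ t ⊆ Δ} else {Δ | slash Γ t ⊆ Δ}

namespace JL

/-- Derivability from a set of hypotheses. -/
inductive DH (fl : Flags) (CS : Set (ℕ × Fml)) (H : Set Fml) : Fml → Prop
  | hyp {A : Fml} : A ∈ H → DH fl CS H A
  | der {A : Fml} : Deriv fl CS A → DH fl CS H A
  | mp {A B : Fml} : DH fl CS H (A.imp B) → DH fl CS H A → DH fl CS H B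

variable {fl : Flags} {CS : Set (ℕ × Fml)}

lemma deriv_id (A : Fml) : Deriv fl CS (A.imp A) :=
  ((Deriv.ax (StarAxiom.cl2 A (A.imp A) A)).mp
      (Deriv.ax (StarAxiom.cl1 A (A.imp A)))).mp (Deriv.ax (StarAxiom.cl1 A A))

lemma DH.ded {H : Set Fml} {A B : Fml} (h : DH fl CS (insert A H) B) :
    DH fl CS H (A.imp B) := by
  induction h with
  | hyp hB =>
    rcases hB with rfl | hB
    · exact DH.der (deriv_id _)
    · exact DH.mp (DH.der (Deriv.ax (StarAxiom.cl1 _ _))) (DH.hyp hB)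
  | der d => exact DH.mp (DH.der (Deriv.ax (StarAxiom.cl1 _ _))) (DH.der d)
  | mp _ _ ih1 ih2 =>
    exact DH.mp (DH.mp (DH.der (Deriv.ax (StarAxiom.cl2 _ _ _))) ih1) ih2

lemma DH.toDeriv {A : Fml} (h : DH fl CS ∅ A) : Deriv fl CS A := by
  induction h with
  | hyp h => exact absurd h (Set.notMem_empty _)
  | der d => exact d
  | mp _ _ ih1 ih2 => exact ih1.mp ih2

lemma DH.mono {H H' : Set Fml} (hs : H ⊆ H') {A : Fml} (h : DH fl CS H A) :
    DH fl CS H' A := by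
  induction h with
  | hyp h => exact DH.hyp (hs h)
  | der d => exact DH.der d
  | mp _ _ ih1 ih2 => exact ih1.mp ih2

lemma deriv_exfalso (A : Fml) : Deriv fl CS (Fml.bot.imp A) := by
  have b : DH fl CS (insert Fml.bot ∅) Fml.bot := DH.hyp (Set.mem_insert _ _)
  have nn : DH fl CS (insert Fml.bot ∅) A.neg.neg :=
    DH.mp (DH.der (Deriv.ax (StarAxiom.cl1 Fml.bot A.neg))) b
  exact (DH.mp (DH.der (Deriv.ax (StarAxiom.cl3 A))) nn).ded.toDeriv

lemma deriv_not_imp (A B : Fml) : Deriv fl CS (A.neg.imp (A.imp B)) := by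
  have h1 : DH fl CS (insert A (insert A.neg ∅)) Fml.bot :=
    DH.mp (DH.hyp (Set.mem_insert_of_mem _ (Set.mem_insert _ _))) (DH.hyp (Set.mem_insert _ _))
  exact (DH.mp (DH.der (deriv_exfalso B)) h1).ded.ded.toDeriv

lemma deriv_orI1 (A B : Fml) : Deriv fl CS (A.imp (A.or' B)) := by
  have h1 : DH fl CS (insert A.neg (insert A ∅)) Fml.bot :=
    DH.mp (DH.hyp (Set.mem_insert _ _)) (DH.hyp (Set.mem_insert_of_mem _ (Set.mem_insert _ _)))
  exact (DH.mp (DH.der (deriv_exfalso B)) h1).ded.ded.toDeriv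

lemma deriv_orI2 (A B : Fml) : Deriv fl CS (B.imp (A.or' B)) :=
  Deriv.ax (StarAxiom.cl1 B A.neg)

lemma deriv_andI (A B : Fml) : Deriv fl CS (A.imp (B.imp (A.and' B))) := by
  have hA : DH fl CS (insert (A.imp B.neg) (insert B (insert A ∅))) A :=
    DH.hyp (by simp)
  have hB : DH fl CS (insert (A.imp B.neg) (insert B (insert A ∅))) B :=
    DH.hyp (by simp)
  have hi : DH fl CS (insert (A.imp B.neg) (insert B (insert A ∅))) (A.imp B.neg) :=
    DH.hyp (Set.mem_insert _ _)
  exact (DH.mp (DH.mp hi hA) hB).ded.ded.ded.toDeriv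

lemma deriv_andE1 (A B : Fml) : Deriv fl CS ((A.and' B).imp A) := by
  set H1 : Set Fml := insert (A.and' B) ∅
  have inner : DH fl CS (insert A.neg H1) Fml.bot := by
    have hab : DH fl CS (insert A.neg H1) (A.imp B.neg) :=
      DH.mp (DH.der (deriv_not_imp A B.neg)) (DH.hyp (Set.mem_insert _ _))
    exact DH.mp (DH.hyp (Set.mem_insert_of_mem _ (Set.mem_insert _ _))) hab
  have nn : DH fl CS H1 A.neg.neg := inner.ded
  exact (DH.mp (DH.der (Deriv.ax (StarAxiom.cl3 A))) nn).ded.toDeriv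

lemma deriv_andE2 (A B : Fml) : Deriv fl CS ((A.and' B).imp B) := by
  set H1 : Set Fml := insert (A.and' B) ∅
  have inner : DH fl CS (insert B.neg H1) Fml.bot := by
    have hab : DH fl CS (insert B.neg H1) (A.imp B.neg) :=
      DH.mp (DH.der (Deriv.ax (StarAxiom.cl1 B.neg A))) (DH.hyp (Set.mem_insert _ _))
    exact DH.mp (DH.hyp (Set.mem_insert_of_mem _ (Set.mem_insert _ _))) hab
  have nn : DH fl CS H1 B.neg.neg := inner.ded
  exact (DH.mp (DH.der (Deriv.ax (StarAxiom.cl3 B))) nn).ded.toDeriv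

/-- Curried implications `F₁ → (F₂ → … → B)`. -/
def impList (l : List Fml) (B : Fml) : Fml := l.foldr Fml.imp B

lemma dh_conj {H : Set Fml} : ∀ l : List Fml, (∀ A ∈ l, DH fl CS H A) →
    DH fl CS H (conjList l)
  | [], _ => DH.der (deriv_id Fml.bot)
  | A :: l, h =>
    DH.mp (DH.mp (DH.der (deriv_andI A (conjList l))) (h A (by simp)))
      (dh_conj l fun B hB => h B (by simp [hB]))

lemma deriv_swapList : ∀ (l : List Fml) (A B : Fml),
    Deriv fl CS ((impList l (A.imp B)).imp (A.imp (impList l B)))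
  | [], A, B => deriv_id (A.imp B)
  | x :: l, A, B => by
    set H : Set Fml :=
      insert x (insert A (insert (x.imp (impList l (A.imp B))) ∅)) with hH
    have hx : DH fl CS H x := DH.hyp (by simp [hH])
    have hA : DH fl CS H A := DH.hyp (by simp [hH])
    have hh : DH fl CS H (x.imp (impList l (A.imp B))) := DH.hyp (by simp [hH])
    have u : DH fl CS H (impList l (A.imp B)) := DH.mp hh hx
    have v : DH fl CS H (A.imp (impList l B)) :=
      DH.mp (DH.der (deriv_swapList l A B)) u
    exact (DH.mp v hA).ded.ded.ded.toDeriv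

lemma dh_impList : ∀ (l : List Fml) (B : Fml),
    DH fl CS {x | x ∈ l} B → Deriv fl CS (impList l B)
  | [], B, h => by
    have : ({x | x ∈ ([] : List Fml)} : Set Fml) = ∅ := by ext; simp
    exact (this ▸ h).toDeriv
  | A :: l, B, h => by
    have hs : ({x | x ∈ A :: l} : Set Fml) = insert A {x | x ∈ l} := by ext; simp
    have h2 : DH fl CS {x | x ∈ l} (A.imp B) := (hs ▸ h).ded
    exact (deriv_swapList l A B).mp (dh_impList l (A.imp B) h2)

lemma dh_exists_list {H : Set Fml} {B : Fml} (h : DH fl CS H B) :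
    ∃ l : List Fml, (∀ A ∈ l, A ∈ H) ∧ DH fl CS {x | x ∈ l} B := by
  induction h with
  | @hyp A hA => exact ⟨[A], by simpa using hA, DH.hyp (by simp)⟩
  | der d => exact ⟨[], by simp, DH.der d⟩
  | mp _ _ ih1 ih2 =>
    obtain ⟨l1, hl1, d1⟩ := ih1
    obtain ⟨l2, hl2, d2⟩ := ih2
    refine ⟨l1 ++ l2, ?_, DH.mp (d1.mono ?_) (d2.mono ?_)⟩
    · intro A hA; rcases List.mem_append.1 hA with h' | h'
      exacts [hl1 A h', hl2 A h']
    · intro x hx; simp only [Set.mem_setOf_eq, List.mem_append]; exact Or.inl hx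
    · intro x hx; simp only [Set.mem_setOf_eq, List.mem_append]; exact Or.inr hx

lemma deriv_impList_to_conj : ∀ (l : List Fml) (B : Fml),
    Deriv fl CS ((impList l B).imp ((conjList l).imp B))
  | [], B => Deriv.ax (StarAxiom.cl1 B (Fml.bot.imp Fml.bot))
  | A :: l, B => by
    set H : Set Fml :=
      insert (A.and' (conjList l)) (insert (A.imp (impList l B)) ∅) with hH
    have h2 : DH fl CS H (A.and' (conjList l)) := DH.hyp (by simp [hH])
    have h1 : DH fl CS H (A.imp (impList l B)) := DH.hyp (by simp [hH])
    have a : DH fl CS H A := DH.mp (DH.der (deriv_andE1 _ _)) h2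
    have c : DH fl CS H (conjList l) := DH.mp (DH.der (deriv_andE2 _ _)) h2
    have i : DH fl CS H (impList l B) := DH.mp h1 a
    have j : DH fl CS H ((conjList l).imp B) :=
      DH.mp (DH.der (deriv_impList_to_conj l B)) i
    exact (DH.mp j c).ded.ded.toDeriv

lemma setConsistent_iff {Γ : Set Fml} :
    SetConsistent fl CS Γ ↔ ¬ DH fl CS Γ Fml.bot := by
  constructor
  · intro hc hd
    obtain ⟨l, hl, d⟩ := dh_exists_list hd
    exact hc l hl ((deriv_impList_to_conj l Fml.bot).mp (dh_impList l _ d))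
  · intro hd l hl d
    exact hd (DH.mp (DH.der d) (dh_conj l fun A hA => DH.hyp (hl A hA)))

/-- Propositional truth evaluation forgetting justifications. -/
def ev : Fml → Prop
  | .atom _ => True
  | .bot => False
  | .imp A B => ev A → ev B
  | .just _ F => ev F

lemma ev_ax {fl : Flags} {A : Fml} (h : StarAxiom fl A) : ev A := by
  induction h <;> simp only [ev, Fml.neg, Fml.or', Fml.and'] <;> tauto

lemma ev_anFml (c : Tm) (A : Fml) : ∀ n : ℕ, ev (anFml c A n) ↔ ev A
  | 0 => Iff.rfl
  | n + 1 => ev_anFml c A n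

variable {fl : Flags} {CS : Set (ℕ × Fml)}

lemma ev_deriv (hCS : IsCS fl CS) {A : Fml} (h : Deriv fl CS A) : ev A := by
  induction h with
  | ax hA => exact ev_ax hA
  | mp _ _ ih1 ih2 => exact ih1 ih2
  | @an c A n hc => exact (ev_anFml _ _ n).2 (ev_ax (hCS _ hc))

lemma empty_consistent (hCS : IsCS fl CS) : SetConsistent fl CS (∅ : Set Fml) := by
  intro l hl hd
  have : l = [] := by
    cases l with
    | nil => rfl
    | cons A l => exact absurd (hl A (by simp)) (Set.notMem_empty _)
  subst this
  exact ev_deriv hCS hd (fun h => h)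

lemma chain_mem_list {c : Set (Set Fml)} (hc : IsChain (· ⊆ ·) c) {s0 : Set Fml}
    (h0 : s0 ∈ c) : ∀ l : List Fml, (∀ A ∈ l, ∃ s ∈ c, A ∈ s) →
      ∃ s ∈ c, ∀ A ∈ l, A ∈ s
  | [], _ => ⟨s0, h0, by simp⟩
  | A :: l, h => by
    obtain ⟨s, hs, hsl⟩ := chain_mem_list hc h0 l (fun B hB => h B (by simp [hB]))
    obtain ⟨sA, hsA, hA⟩ := h A (by simp)
    rcases hc.total hs hsA with hle | hle
    · exact ⟨sA, hsA, fun B hB => by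
        rcases List.mem_cons.1 hB with rfl | hB
        exacts [hA, hle (hsl B hB)]⟩
    · exact ⟨s, hs, fun B hB => by
        rcases List.mem_cons.1 hB with rfl | hB
        exacts [hle hA, hsl B hB]⟩

lemma lindenbaum {Γ : Set Fml} (h : SetConsistent fl CS Γ) :
    ∃ Δ : Set Fml, Γ ⊆ Δ ∧ MaxConsistent fl CS Δ := by
  obtain ⟨m, hm, hsub⟩ := zorn_subset_nonempty {Δ | SetConsistent fl CS Δ}
    (fun c hcS hchain hne => by
      obtain ⟨s0, hs0⟩ := hne
      refine ⟨⋃₀ c, ?_, fun s hs => Set.subset_sUnion_of_mem hs⟩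
      intro l hl hd
      obtain ⟨s, hs, hls⟩ := chain_mem_list hchain hs0 l
        (fun A hA => (Set.mem_sUnion.1 (hl A hA)))
      exact hcS hs l hls hd) Γ h
  refine ⟨m, hm, hsub.1, fun Δ hΔ hΔc => ?_⟩
  exact hΔ.2 (hsub.2 hΔc hΔ.1.subset)

/-! MCS facts -/

lemma mcs_not_dh_bot {Γ : Set Fml} (h : MaxConsistent fl CS Γ) :
    ¬ DH fl CS Γ Fml.bot := setConsistent_iff.1 h.1

lemma mcs_neg_of_not_mem {Γ : Set Fml} (h : MaxConsistent fl CS Γ) {A : Fml}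
    (hA : A ∉ Γ) : DH fl CS Γ A.neg := by
  have : ¬ SetConsistent fl CS (insert A Γ) :=
    h.2 _ (Set.ssubset_insert hA)
  have hd : DH fl CS (insert A Γ) Fml.bot := by
    by_contra hd
    exact this (setConsistent_iff.2 hd)
  exact hd.ded

lemma mcs_dh_mem {Γ : Set Fml} (h : MaxConsistent fl CS Γ) {A : Fml}
    (hA : DH fl CS Γ A) : A ∈ Γ := by
  by_contra hn
  exact mcs_not_dh_bot h (DH.mp (mcs_neg_of_not_mem h hn) hA)

lemma mcs_deriv_mem {Γ : Set Fml} (h : MaxConsistent fl CS Γ) {A : Fml}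
    (hA : Deriv fl CS A) : A ∈ Γ := mcs_dh_mem h (DH.der hA)

lemma mcs_mp {Γ : Set Fml} (h : MaxConsistent fl CS Γ) {A B : Fml}
    (h1 : A.imp B ∈ Γ) (h2 : A ∈ Γ) : B ∈ Γ :=
  mcs_dh_mem h (DH.mp (DH.hyp h1) (DH.hyp h2))

lemma mcs_bot_not_mem {Γ : Set Fml} (h : MaxConsistent fl CS Γ) :
    Fml.bot ∉ Γ := fun hb => mcs_not_dh_bot h (DH.hyp hb)

lemma mcs_imp_iff {Γ : Set Fml} (h : MaxConsistent fl CS Γ) (A B : Fml) :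
    A.imp B ∈ Γ ↔ (A ∉ Γ ∨ B ∈ Γ) := by
  constructor
  · intro hi
    by_cases hA : A ∈ Γ
    · exact Or.inr (mcs_mp h hi hA)
    · exact Or.inl hA
  · rintro (hA | hB)
    · exact mcs_dh_mem h
        (DH.mp (DH.der (deriv_not_imp A B)) (mcs_neg_of_not_mem h hA))
    · exact mcs_dh_mem h
        (DH.mp (DH.der (Deriv.ax (StarAxiom.cl1 B A))) (DH.hyp hB))

lemma mcs_wmpc {Γ : Set Fml} (h : MaxConsistent fl CS Γ) : Γ ∈ WMPC :=
  fun _ _ h1 h2 => mcs_mp h h1 h2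

lemma mcs_jc {Γ : Set Fml} (h : MaxConsistent fl CS Γ) {t : Tm}
    (ht : t.isCStar = true) {A B : Fml} (h1 : Fml.just t (A.imp B) ∈ Γ)
    (h2 : Fml.just t A ∈ Γ) : Fml.just t B ∈ Γ := by
  have hand : DH fl CS Γ ((Fml.just t A).and' (Fml.just t (A.imp B))) :=
    DH.mp (DH.mp (DH.der (deriv_andI _ _)) (DH.hyp h2)) (DH.hyp h1)
  exact mcs_dh_mem h (DH.mp (DH.der (Deriv.ax (StarAxiom.jcstar t A B ht))) hand)

lemma slash_wmpc {Γ : Set Fml} (h : MaxConsistent fl CS Γ) {t : Tm}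
    (ht : t.isCStar = true) : slash Γ t ∈ WMPC :=
  fun _ _ h1 h2 => mcs_jc h ht h1 h2

lemma mcs_just_plus_left {Γ : Set Fml} (h : MaxConsistent fl CS Γ) {s : Tm}
    (t : Tm) {A : Fml} (hs : Fml.just s A ∈ Γ) : Fml.just (s.plus t) A ∈ Γ := by
  have h1 : DH fl CS Γ ((Fml.just s A).or' (Fml.just t A)) :=
    DH.mp (DH.der (deriv_orI1 _ _)) (DH.hyp hs)
  exact mcs_dh_mem h (DH.mp (DH.der (Deriv.ax (StarAxiom.jplus s t A))) h1)

lemma mcs_just_plus_right {Γ : Set Fml} (h : MaxConsistent fl CS Γ) (s : Tm)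
    {t : Tm} {A : Fml} (ht : Fml.just t A ∈ Γ) : Fml.just (s.plus t) A ∈ Γ := by
  have h1 : DH fl CS Γ ((Fml.just s A).or' (Fml.just t A)) :=
    DH.mp (DH.der (deriv_orI2 _ _)) (DH.hyp ht)
  exact mcs_dh_mem h (DH.mp (DH.der (Deriv.ax (StarAxiom.jplus s t A))) h1)

/-- Internalization via `c*`-terms. -/
lemma intern (hAx : AxAppropriate fl CS) {A : Fml} (h : Deriv fl CS A) :
    ∃ s : Tm, s.isCStar = true ∧ Deriv fl CS (Fml.just s A) := by
  induction h with
  | @ax A hA =>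
    obtain ⟨c, hc⟩ := hAx A hA
    refine ⟨(Tm.const c).plus Tm.cstar, by simp [Tm.isCStar], ?_⟩
    have h0 : Deriv fl CS (Fml.just (Tm.const c) A) := Deriv.an 0 hc
    exact (Deriv.ax (StarAxiom.jplus _ _ _)).mp ((deriv_orI1 _ _).mp h0)
  | @mp A B _ _ ih1 ih2 =>
    obtain ⟨s1, hs1, d1⟩ := ih1
    obtain ⟨s2, hs2, d2⟩ := ih2
    refine ⟨s1.plus s2, by simp [Tm.isCStar, hs1], ?_⟩
    have e1 : Deriv fl CS (Fml.just (s1.plus s2) (A.imp B)) :=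
      (Deriv.ax (StarAxiom.jplus s1 s2 (A.imp B))).mp ((deriv_orI1 _ _).mp d1)
    have e2 : Deriv fl CS (Fml.just (s1.plus s2) A) :=
      (Deriv.ax (StarAxiom.jplus s1 s2 A)).mp ((deriv_orI2 _ _).mp d2)
    have hand : Deriv fl CS
        ((Fml.just (s1.plus s2) A).and' (Fml.just (s1.plus s2) (A.imp B))) :=
      ((deriv_andI _ _).mp e2).mp e1
    exact (Deriv.ax (StarAxiom.jcstar _ A B (by simp [Tm.isCStar, hs1]))).mp hand
  | @an c A n hc =>
    refine ⟨(bangIter (n + 1) (Tm.const c)).plus Tm.cstar, by simp [Tm.isCStar], ?_⟩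
    have h0 : Deriv fl CS (Fml.just (bangIter (n + 1) (Tm.const c)) (anFml (Tm.const c) A n)) :=
      Deriv.an (n + 1) hc
    exact (Deriv.ax (StarAxiom.jplus _ _ _)).mp ((deriv_orI1 _ _).mp h0)

lemma jd_core {Γ : Set Fml} (h : MaxConsistent fl CS Γ) {u : Tm}
    (hu : u.isCStar = true) : ∀ (l : List Fml) (B : Fml),
    (∀ F ∈ l, Fml.just u F ∈ Γ) → Fml.just u (impList l B) ∈ Γ →
    Fml.just u B ∈ Γ
  | [], B, _, hi => hi
  | A :: l, B, hl, hi =>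
    jd_core h hu l B (fun F hF => hl F (by simp [hF]))
      (mcs_jc h hu hi (hl A (by simp)))

lemma slash_consistent (hAx : AxAppropriate fl CS) (hjd : fl.jd = true)
    {Γ : Set Fml} (hΓ : MaxConsistent fl CS Γ) (t : Tm) :
    SetConsistent fl CS (slash Γ t) := by
  intro l hl hd
  have h1 : DH fl CS {x | x ∈ l} (conjList l) :=
    dh_conj l (fun A hA => DH.hyp hA)
  have h2 : DH fl CS {x | x ∈ l} Fml.bot := DH.mp (DH.der hd) h1
  have h3 : Deriv fl CS (impList l Fml.bot) := dh_impList l _ h2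
  obtain ⟨s, hs, hsd⟩ := intern hAx h3
  set u := t.plus s with hu'
  have hu : u.isCStar = true := by simp [hu', Tm.isCStar, hs]
  have hu1 : Fml.just u (impList l Fml.bot) ∈ Γ :=
    mcs_deriv_mem hΓ
      ((Deriv.ax (StarAxiom.jplus t s _)).mp ((deriv_orI2 _ _).mp hsd))
  have hu2 : ∀ F ∈ l, Fml.just u F ∈ Γ :=
    fun F hF => mcs_just_plus_left hΓ s (hl F hF)
  have hb : Fml.just u Fml.bot ∈ Γ := jd_core hΓ hu l Fml.bot hu2 hu1
  have : Fml.bot ∈ Γ :=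
    mcs_mp hΓ (mcs_deriv_mem hΓ (Deriv.ax (StarAxiom.jd u hjd))) hb
  exact mcs_bot_not_mem hΓ this

lemma mcs_jt_slash {Γ : Set Fml} (h : MaxConsistent fl CS Γ)
    (hjt : fl.jt = true) (t : Tm) : slash Γ t ⊆ Γ := fun F hF =>
  mcs_mp h (mcs_deriv_mem h (Deriv.ax (StarAxiom.jt t F hjt))) hF

end JL


/-- **The canonical model is an `L*_CS`-subset model**: the structure with
worlds `W^C = P(L_J)`, normal worlds the maximal `L*_CS`-consistent sets,
`V^C(Γ,F)=1` iff `F ∈ Γ`, and canonical evidence function `E^C` is an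
`L*_CS`-subset model, provided `jd ∉ L*`, or `CS` is axiomatically appropriate,
or `jt ∈ L*`. -/
theorem canonical_model_is_subset_model (fl : Flags) (CS : Set (ℕ × Fml))
    (hCS : IsCS fl CS)
    (h : fl.jd = false ∨ AxAppropriate fl CS ∨ fl.jt = true) :
    ∃ M : SubsetModel fl CS (Set Fml),
      M.W0 = {Γ : Set Fml | MaxConsistent fl CS Γ} ∧
      M.V = (fun Γ F => F ∈ Γ) ∧
      M.E = canonicalE := by
  classical
  refine ⟨⟨{Γ : Set Fml | MaxConsistent fl CS Γ}, (fun Γ F => F ∈ Γ), canonicalE,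
      ?_, ?_, ?_, ?_, ?_, ?_, ?_, ?_, ?_, ?_, ?_⟩, rfl, rfl, rfl⟩
  · -- w0_nonempty
    obtain ⟨Δ, -, hΔ⟩ := JL.lindenbaum (JL.empty_consistent hCS)
    exact ⟨Δ, hΔ⟩
  · -- v_bot
    intro Γ hΓ
    exact JL.mcs_bot_not_mem hΓ
  · -- v_imp
    intro Γ hΓ F G
    exact JL.mcs_imp_iff hΓ F G
  · -- v_just
    intro Γ hΓ t F
    constructor
    · intro hF Δ hΔ
      by_cases hc : t.isCStar = true
      · simp only [canonicalE, hc, if_true] at hΔ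
        exact hΔ.2 hF
      · simp only [canonicalE, hc, if_false] at hΔ
        exact hΔ hF
    · intro hsub
      have hmem : slash Γ t ∈ canonicalE Γ t := by
        by_cases hc : t.isCStar = true
        · simp only [canonicalE, hc, if_true]
          exact ⟨JL.slash_wmpc hΓ hc, fun _ hA => hA⟩
        · simp only [canonicalE, hc, if_false]
          exact fun _ hA => hA
      exact hsub hmem
  · -- e_plus
    intro Γ hΓ s t Δ hΔ
    have hsl : slash Γ s ⊆ slash Γ (s.plus t) :=
      fun A hA => JL.mcs_just_plus_left hΓ t hA
    have htl : slash Γ t ⊆ slash Γ (s.plus t) :=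
      fun A hA => JL.mcs_just_plus_right hΓ s hA
    have hsub : slash Γ (s.plus t) ⊆ Δ := by
      by_cases hp : (s.plus t).isCStar = true
      · simp only [canonicalE, hp, if_true] at hΔ
        exact hΔ.2
      · simp only [canonicalE, hp, if_false] at hΔ
        exact hΔ
    have hW : s.isCStar = true ∨ t.isCStar = true → Δ ∈ WMPC := by
      intro h'
      have hp : (s.plus t).isCStar = true := by
        rcases h' with h' | h' <;> simp [Tm.isCStar, h']
      simp only [canonicalE, hp, if_true] at hΔ
      exact hΔ.1
    constructor
    · by_cases hc : s.isCStar = true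
      · simp only [canonicalE, hc, if_true]
        exact ⟨hW (Or.inl hc), fun A hA => hsub (hsl hA)⟩
      · simp only [canonicalE, hc, if_false]
        exact fun A hA => hsub (hsl hA)
    · by_cases hc : t.isCStar = true
      · simp only [canonicalE, hc, if_true]
        exact ⟨hW (Or.inr hc), fun A hA => hsub (htl hA)⟩
      · simp only [canonicalE, hc, if_false]
        exact fun A hA => hsub (htl hA)
  · -- e_cstar
    intro Γ hΓ Δ hΔ
    simp only [canonicalE, Tm.isCStar, if_true] at hΔ
    exact fun A B hA hAB => hΔ.1 A B hAB hA
  · -- e_jd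
    intro hjd Γ hΓ t
    rcases h with hf | hAx | hjt
    · rw [hjd] at hf; exact absurd hf (by simp)
    · obtain ⟨Δ, hΔsub, hΔm⟩ := JL.lindenbaum (JL.slash_consistent hAx hjd hΓ t)
      refine ⟨Δ, hΔm, ?_⟩
      by_cases hc : t.isCStar = true
      · simp only [canonicalE, hc, if_true]
        exact ⟨JL.mcs_wmpc hΔm, hΔsub⟩
      · simp only [canonicalE, hc, if_false]
        exact hΔsub
    · refine ⟨Γ, hΓ, ?_⟩
      by_cases hc : t.isCStar = true
      · simp only [canonicalE, hc, if_true]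
        exact ⟨JL.mcs_wmpc hΓ, JL.mcs_jt_slash hΓ hjt t⟩
      · simp only [canonicalE, hc, if_false]
        exact JL.mcs_jt_slash hΓ hjt t
  · -- e_jt
    intro hjt Γ hΓ t
    by_cases hc : t.isCStar = true
    · simp only [canonicalE, hc, if_true]
      exact ⟨JL.mcs_wmpc hΓ, JL.mcs_jt_slash hΓ hjt t⟩
    · simp only [canonicalE, hc, if_false]
      exact JL.mcs_jt_slash hΓ hjt t
  · -- e_j4
    intro hj4 Γ hΓ t Δ hΔ F hF
    simp only [canonicalE, Tm.isCStar, if_false] at hΔ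
    exact hΔ (JL.mcs_mp hΓ
      (JL.mcs_deriv_mem hΓ (Deriv.ax (StarAxiom.j4 t F hj4))) hF)
  · -- e_cs
    intro Γ hΓ c A hcA Δ hΔ
    simp only [canonicalE, Tm.isCStar, if_false] at hΔ
    exact hΔ (JL.mcs_deriv_mem hΓ (Deriv.an 0 hcA))
  · -- e_cs_bang
    intro Γ hΓ c A hcA n Δ hΔ
    simp only [canonicalE, bangIter, Tm.isCStar, if_false] at hΔ
    exact hΔ (JL.mcs_deriv_mem hΓ (Deriv.an (n + 1) hcA))
end
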